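/- arXiv:2008.05191 — 2 statements merged into one kernel-verified Lean document; each statement's English description precedes it below -/
import Mathlib

section
/- Let K : ℝ^d → [0,∞) be a bounded kernel with sup over all first-order partial derivatives ‖K^{(γ)}‖_∞ < ∞ (|γ| = 1), let h > 0 be fixed, and let X₁,…,Xₙ ∈ ℝ^d be a fixed sample. For a multi-index α ∈ ℕ₀^d define the local sample moment s_n^α(x) := n⁻¹ Σᵢ K_h(Xᵢ − x) h^{−|α|} (Xᵢ − x)^α, where K_h(z) := h^{−d} K(z/h). Then there exists L̃ > 0 (one may take L̃ = max(diam{X₁,…,Xₙ}, 1)² · max(‖K‖_∞, sup_{|γ|=1}‖K^{(γ)}‖_∞) · (3 + h^{−d−1}) up to the paper's bookkeeping; the statement asserts existence) such that |s_n^α(x) − s_n^α(y)| ≤ L̃ ‖x − y‖ for all x, y in the convex hull of X₁,…,Xₙ and all multi-indices α with |α| ≤ 2. -/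
/-!
Each summand of `s_n^α` is the product of `x ↦ K_h(Xᵢ - x)`, which is locally Lipschitz because
`K` has a bounded derivative, and a polynomial in `x`. Hence `s_n^α` is locally Lipschitz, and
therefore Lipschitz on the compact convex hull of the sample. Since only finitely many
multi-indices satisfy `|α| ≤ 2`, one constant serves them all.
-/

open MeasureTheory Matrix Filter Topology Real

noncomputable section

abbrev E (d : ℕ) := EuclideanSpace ℝ (Fin d)

/-- `s_h(x) = ∫ K(z) f(x+hz) dz` -/
def sH {d : ℕ} (K f : E d → ℝ) (h : ℝ) (x : E d) : ℝ := ∫ z, K z * f (x + h • z)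

/-- `s⃗_h(x) = ∫ K(z) z f(x+hz) dz` -/
def sVec {d : ℕ} (K f : E d → ℝ) (h : ℝ) (x : E d) : E d :=
  ∫ z, (K z * f (x + h • z)) • z

/-- `S_h(x) = ∫ K(z) z zᵀ f(x+hz) dz` -/
def sMat {d : ℕ} (K f : E d → ℝ) (h : ℝ) (x : E d) : Matrix (Fin d) (Fin d) ℝ :=
  fun i j => ∫ z, K z * z i * z j * f (x + h • z)

/-- conditional covariance matrix `Σ_h(x) = h²(s_h(x)⁻¹ S_h(x) − s_h(x)⁻² s⃗_h(x) s⃗_h(x)ᵀ)` -/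
def condCov {d : ℕ} (K f : E d → ℝ) (h : ℝ) (x : E d) : Matrix (Fin d) (Fin d) ℝ :=
  h ^ 2 • ((sH K f h x)⁻¹ • sMat K f h x -
    ((sH K f h x) ^ 2)⁻¹ • Matrix.vecMulVec (fun i => sVec K f h x i) (fun i => sVec K f h x i))

/-- Hessian matrix via iterated `fderiv` in coordinate directions -/
def hessian {d : ℕ} (f : E d → ℝ) (x : E d) : Matrix (Fin d) (Fin d) ℝ :=
  fun i j => fderiv ℝ (fun y => fderiv ℝ f y (EuclideanSpace.single j 1)) x
    (EuclideanSpace.single i 1)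

/-- Frobenius norm of a matrix -/
def frobNorm {m n : ℕ} (A : Matrix (Fin m) (Fin n) ℝ) : ℝ :=
  Real.sqrt (∑ i, ∑ j, (A i j) ^ 2)

/-- `V` is an orthogonal matrix whose columns are eigenvectors of `M`
with eigenvalues `lam` listed in decreasing order:  `lam j` is `λ_{j+1}(M)`. -/
def IsEigenDecomp {d : ℕ} (M V : Matrix (Fin d) (Fin d) ℝ) (lam : Fin d → ℝ) : Prop :=
  Vᵀ * V = 1 ∧ Antitone lam ∧
    ∀ j, M.mulVec (fun i => V i j) = fun i => lam j * V i j

/-- projector `V⊥V⊥ᵀ` onto the span of the eigenvectors `v_{s+1}, …, v_d`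
(0-indexed columns `s, …, d-1`). -/
def projPerp {d : ℕ} (s : ℕ) (V : Matrix (Fin d) (Fin d) ℝ) : Matrix (Fin d) (Fin d) ℝ :=
  fun i i' => ∑ j ∈ Finset.univ.filter (fun j : Fin d => s ≤ (j : ℕ)), V i j * V i' j

/-- the map `z'' ↦ V⊥ z''` built from the columns `s, …, d-1` of `W`. -/
def vperpMap {d : ℕ} (s : ℕ) (W : Matrix (Fin d) (Fin d) ℝ) (z : E (d - s)) : E d :=
  WithLp.toLp 2 (fun i => ∑ j : Fin (d - s), W i ⟨s + (j : ℕ), by have := j.isLt; omega⟩ * z j : Fin d → ℝ)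

/-- multiply a `d × m` matrix (columns of `V⊥`) with a vector, landing in `ℝ^d`. -/
def colsMulVec {d m : ℕ} (Vp : Matrix (Fin d) (Fin m) ℝ) (z : E m) : E d :=
  WithLp.toLp 2 (fun i => ∑ j, Vp i j * z j : Fin d → ℝ)

/-- rescaled kernel `K_h(z) = h^{−d} K(z/h)` -/
def Kh {d : ℕ} (K : E d → ℝ) (h : ℝ) (z : E d) : ℝ := (h ^ d)⁻¹ * K (h⁻¹ • z)

/-- local sample moment `s_n^α(x) = n⁻¹ Σᵢ K_h(Xᵢ − x) h^{−|α|} (Xᵢ − x)^α` -/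
def snMoment {d n : ℕ} (K : E d → ℝ) (h : ℝ) (X : Fin n → E d) (α : Fin d → ℕ)
    (x : E d) : ℝ :=
  (n : ℝ)⁻¹ * ∑ i, Kh K h (X i - x) * (h ^ (∑ k, α k))⁻¹ * ∏ k, (X i k - x k) ^ α k

/-- `s_{n,h}(x) = n⁻¹ Σᵢ K_h(Xᵢ − x)` -/
def snH {d n : ℕ} (K : E d → ℝ) (h : ℝ) (X : Fin n → E d) (x : E d) : ℝ :=
  (n : ℝ)⁻¹ * ∑ i, Kh K h (X i - x)

/-- `s⃗_{n,h}(x) = n⁻¹ Σᵢ K_h(Xᵢ − x) h⁻¹ (Xᵢ − x)` -/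
def snVec {d n : ℕ} (K : E d → ℝ) (h : ℝ) (X : Fin n → E d) (x : E d) : Fin d → ℝ :=
  fun k => (n : ℝ)⁻¹ * ∑ i, Kh K h (X i - x) * (h⁻¹ * (X i k - x k))

/-- `S_{n,h}(x) = n⁻¹ Σᵢ K_h(Xᵢ − x) h⁻² (Xᵢ − x)(Xᵢ − x)ᵀ` -/
def snMat {d n : ℕ} (K : E d → ℝ) (h : ℝ) (X : Fin n → E d) (x : E d) :
    Matrix (Fin d) (Fin d) ℝ :=
  fun k l => (n : ℝ)⁻¹ *
    ∑ i, Kh K h (X i - x) * (h⁻¹ * (X i k - x k)) * (h⁻¹ * (X i l - x l))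

/-- local sample variance `Σ̂_{n,h}(x) = h²(S_{n,h}/s_{n,h} − s⃗_{n,h}s⃗_{n,h}ᵀ/s_{n,h}²)` -/
def sampleCov {d n : ℕ} (K : E d → ℝ) (h : ℝ) (X : Fin n → E d) (x : E d) :
    Matrix (Fin d) (Fin d) ℝ :=
  h ^ 2 • ((snH K h X x)⁻¹ • snMat K h X x -
    ((snH K h X x) ^ 2)⁻¹ • Matrix.vecMulVec (snVec K h X x) (snVec K h X x))

open scoped NNReal

theorem LipschitzOnWith.norm_le_add_mul_of_dist_le {α F : Type*} [PseudoMetricSpace α]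
    [SeminormedAddCommGroup F] {f : α → F} {s : Set α} {K : ℝ≥0} (hf : LipschitzOnWith K f s)
    {x y : α} (hx : x ∈ s) (hy : y ∈ s) {r : ℝ} (hxy : dist y x ≤ r) : ‖f y‖ ≤ ‖f x‖ + K * r :=
  calc ‖f y‖ ≤ ‖f x‖ + dist (f y) (f x) := by
        rw [dist_eq_norm]; exact norm_le_norm_add_norm_sub' (f y) (f x)
    _ ≤ ‖f x‖ + K * r := by
        gcongr; exact (hf.dist_le_mul y hy x hx).trans (by gcongr)

section Smul

variable {α 𝕜 F : Type*} [PseudoMetricSpace α] [SeminormedRing 𝕜] [SeminormedAddCommGroup F]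
  [Module 𝕜 F] [IsBoundedSMul 𝕜 F] {f : α → 𝕜} {g : α → F}

theorem LipschitzOnWith.smul_of_norm_le {s : Set α} {Kf Kg Bf Bg : ℝ≥0}
    (hf : LipschitzOnWith Kf f s) (hg : LipschitzOnWith Kg g s)
    (hfB : ∀ x ∈ s, ‖f x‖ ≤ Bf) (hgB : ∀ x ∈ s, ‖g x‖ ≤ Bg) :
    LipschitzOnWith (Kf * Bg + Bf * Kg) (fun x ↦ f x • g x) s := by
  refine LipschitzOnWith.of_dist_le_mul fun x hx y hy ↦ ?_
  have hsplit : f x • g x - f y • g y = (f x - f y) • g x + f y • (g x - g y) := by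
    rw [sub_smul, smul_sub]; abel
  calc dist (f x • g x) (f y • g y)
      ≤ ‖f x - f y‖ * ‖g x‖ + ‖f y‖ * ‖g x - g y‖ := by
        rw [dist_eq_norm, hsplit]
        exact (norm_add_le _ _).trans (add_le_add (norm_smul_le _ _) (norm_smul_le _ _))
    _ ≤ Kf * dist x y * Bg + Bf * (Kg * dist x y) := by
        rw [← dist_eq_norm, ← dist_eq_norm]
        gcongr
        exacts [hf.dist_le_mul x hx y hy, hgB x hx, hfB y hy, hg.dist_le_mul x hx y hy]
    _ = ↑(Kf * Bg + Bf * Kg) * dist x y := by push_cast; ring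

theorem LocallyLipschitz.smul (hf : LocallyLipschitz f) (hg : LocallyLipschitz g) :
    LocallyLipschitz fun x ↦ f x • g x := by
  intro x
  obtain ⟨Kf, t, ht, hft⟩ := hf x
  obtain ⟨Kg, u, hu, hgu⟩ := hg x
  set v := t ∩ u ∩ Metric.ball x 1
  have hxv : x ∈ v := ⟨⟨mem_of_mem_nhds ht, mem_of_mem_nhds hu⟩, Metric.mem_ball_self one_pos⟩
  have hfv : LipschitzOnWith Kf f v := hft.mono fun _ hy ↦ hy.1.1
  have hgv : LipschitzOnWith Kg g v := hgu.mono fun _ hy ↦ hy.1.2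
  have hfB : ∀ y ∈ v, ‖f y‖ ≤ ↑(‖f x‖₊ + Kf) := fun y hy ↦ by
    simpa using hfv.norm_le_add_mul_of_dist_le hxv hy (Metric.mem_ball.1 hy.2).le
  have hgB : ∀ y ∈ v, ‖g y‖ ≤ ↑(‖g x‖₊ + Kg) := fun y hy ↦ by
    simpa using hgv.norm_le_add_mul_of_dist_le hxv hy (Metric.mem_ball.1 hy.2).le
  exact ⟨_, v, Filter.inter_mem (Filter.inter_mem ht hu) (Metric.ball_mem_nhds x one_pos),
    hfv.smul_of_norm_le hgv hfB hgB⟩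

end Smul

theorem LocallyLipschitz.finset_sum {α ι F : Type*} [PseudoMetricSpace α]
    [SeminormedAddCommGroup F] {f : ι → α → F} (s : Finset ι)
    (hf : ∀ i ∈ s, LocallyLipschitz (f i)) : LocallyLipschitz fun x ↦ ∑ i ∈ s, f i x := by
  classical
  induction s using Finset.induction_on with
  | empty => simpa using LocallyLipschitz.const (0 : F)
  | insert a s ha ih =>
    simp only [Finset.sum_insert ha]
    exact (hf a (Finset.mem_insert_self a s)).add
      (ih fun i hi ↦ hf i (Finset.mem_insert_of_mem hi))

theorem Set.Finite.exists_pos_lipschitzOnWith {ι α β : Type*} [PseudoEMetricSpace α]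
    [PseudoEMetricSpace β] {I : Set ι} (hI : I.Finite) {f : ι → α → β} {s : Set α}
    (hf : ∀ i ∈ I, ∃ K, LipschitzOnWith K (f i) s) :
    ∃ K : ℝ≥0, 0 < K ∧ ∀ i ∈ I, LipschitzOnWith K (f i) s := by
  choose! K hK using hf
  refine ⟨∑ i ∈ hI.toFinset, K i + 1, by positivity, fun i hi ↦ (hK i hi).weaken ?_⟩
  exact (Finset.single_le_sum (fun _ _ ↦ zero_le) (hI.mem_toFinset.2 hi)).trans
    (le_add_of_nonneg_right zero_le_one)

theorem finite_setOf_sum_le {ι : Type*} [Fintype ι] [DecidableEq ι] (m : ℕ) :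
    {α : ι → ℕ | ∑ i, α i ≤ m}.Finite :=
  (Set.finite_Iic fun _ ↦ m).subset fun α hα i ↦
    (Finset.single_le_sum (fun j _ ↦ Nat.zero_le (α j)) (Finset.mem_univ i)).trans hα

theorem locallyLipschitz_snMoment {d n : ℕ} {K : E d → ℝ} (hK : LocallyLipschitz K) (h : ℝ)
    (X : Fin n → E d) (α : Fin d → ℕ) : LocallyLipschitz (snMoment K h X α) := by
  have hKh (a : E d) : LocallyLipschitz fun x ↦ Kh K h (a - x) :=
    (LocallyLipschitz.const (h ^ d)⁻¹).smul (hK.comp (g := fun x : E d ↦ h⁻¹ • (a - x))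
      (ContDiff.locallyLipschitz (𝕂 := ℝ) (by fun_prop)))
  have hmonomial (a : E d) :
      LocallyLipschitz fun x : E d ↦ (h ^ ∑ k, α k)⁻¹ * ∏ k, (a k - x k) ^ α k :=
    ContDiff.locallyLipschitz (𝕂 := ℝ) (by fun_prop)
  have hformula : snMoment K h X α = fun x ↦ (n : ℝ)⁻¹ •
      ∑ i, Kh K h (X i - x) • ((h ^ ∑ k, α k)⁻¹ * ∏ k, (X i k - x k) ^ α k) := by
    funext x
    simp only [snMoment, smul_eq_mul, mul_assoc]
  rw [hformula]
  exact (LocallyLipschitz.const _).smul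
    (LocallyLipschitz.finset_sum _ fun i _ ↦ (hKh (X i)).smul (hmonomial (X i)))

theorem sample_moments_lipschitz_general {d n : ℕ}
    (K : E d → ℝ)
    (hK_diff : Differentiable ℝ K)
    (hK_d1 : ∃ C, ∀ z, ‖fderiv ℝ K z‖ ≤ C)
    (h : ℝ) (X : Fin n → E d) :
    ∃ L : ℝ, 0 < L ∧
      ∀ α : Fin d → ℕ, (∑ k, α k) ≤ 2 →
        ∀ x ∈ convexHull ℝ (Set.range X), ∀ y ∈ convexHull ℝ (Set.range X),
          |snMoment K h X α x - snMoment K h X α y| ≤ L * ‖x - y‖ := by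
  obtain ⟨C, hC⟩ := hK_d1
  have hK : LipschitzWith C.toNNReal K :=
    lipschitzWith_of_nnnorm_fderiv_le (𝕜 := ℝ) hK_diff fun z ↦ by
      rw [← NNReal.coe_le_coe, coe_nnnorm]
      exact (hC z).trans (Real.le_coe_toNNReal C)
  have hS : IsCompact (convexHull ℝ (Set.range X)) := (Set.finite_range X).isCompact_convexHull ℝ
  obtain ⟨L, hL0, hL⟩ := (finite_setOf_sum_le 2).exists_pos_lipschitzOnWith fun α _ ↦
    (locallyLipschitz_snMoment hK.locallyLipschitz h X α).locallyLipschitzOn.exists_lipschitzOnWith_of_compact hS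
  refine ⟨L, hL0, fun α hα x hx y hy ↦ ?_⟩
  simpa [Real.dist_eq, dist_eq_norm] using (hL α hα).dist_le_mul x hx y hy

/-- **Lipschitz continuity of local sample moments.** For a bounded kernel `K`
with bounded first-order partial derivatives, fixed `h > 0` and sample `X₁,…,Xₙ`, there is
`L̃ > 0` such that `|s_n^α(x) − s_n^α(y)| ≤ L̃ ‖x − y‖` for all `x, y` in the convex hull of
the sample and all multi-indices `α` with `|α| ≤ 2`. -/
theorem sample_moments_lipschitz {d n : ℕ}
    (K : E d → ℝ) (hK_nonneg : ∀ z, 0 ≤ K z)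
    (hK_bdd : ∃ C, ∀ z, K z ≤ C)
    (hK_diff : Differentiable ℝ K)
    (hK_d1 : ∃ C, ∀ z, ‖fderiv ℝ K z‖ ≤ C)
    (h : ℝ) (hh : 0 < h) (X : Fin n → E d) :
    ∃ L : ℝ, 0 < L ∧
      ∀ α : Fin d → ℕ, (∑ k, α k) ≤ 2 →
        ∀ x ∈ convexHull ℝ (Set.range X), ∀ y ∈ convexHull ℝ (Set.range X),
          |snMoment K h X α x - snMoment K h X α y| ≤ L * ‖x - y‖ :=
  sample_moments_lipschitz_general K hK_diff hK_d1 h X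
end
end

section
/- Let K : ℝ^d → [0,∞) be a rotationally symmetric kernel K(y) = c_{k,d} k(‖y‖²) with differentiable profile k, set g(t) := −k'(t) and G(y) := c_{g,d} g(‖y‖²) with normalization constant c_{g,d}. For a sample X₁,…,Xₙ ∈ ℝ^d and h > 0 define the kernel density estimators f̂_{h,K}(x) := (c_{k,d}/(n h^d)) Σᵢ k(‖(Xᵢ−x)/h‖²) and f̂_{h,G}(x) := (c_{g,d}/(n h^d)) Σᵢ g(‖(Xᵢ−x)/h‖²), and the mean shift m_{h,G}(x) := ( Σᵢ Xᵢ g(‖(Xᵢ−x)/h‖²) ) / ( Σᵢ g(‖(Xᵢ−x)/h‖²) ) − x (defined whenever the denominator is positive). Then for every x with Σᵢ g(‖(Xᵢ−x)/h‖²) > 0, the gradient of the kernel density estimator satisfies ∇f̂_{h,K}(x) = f̂_{h,G}(x) · (2 c_{k,d} / (h² c_{g,d})) · m_{h,G}(x). -/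
open MeasureTheory Matrix Filter Topology Real

noncomputable section

/-
Differentiating `k (‖h⁻¹ • (Xᵢ - y)‖²)` in `y` gives, by the chain rule, `2 h⁻² g(tᵢ) • (Xᵢ - x)` with
`tᵢ = ‖h⁻¹ • (Xᵢ - x)‖²`. Summing, the gradient of the estimator is a multiple of
`∑ g(tᵢ) • (Xᵢ - x) = (∑ g(tᵢ)) • (centerMass - x)`, and the centre of mass with weights `g(tᵢ)` minus `x`
is the mean shift; the factor `∑ g(tᵢ)` is `f̂_{h,G}(x)` up to the normalising constants.
-/

section Gradient

variable {F : Type*} [NormedAddCommGroup F] [InnerProductSpace ℝ F] [CompleteSpace F]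

section

variable {f : F → ℝ} {f' x : F}

theorem HasGradientAt.const_mul (c : ℝ) (hf : HasGradientAt f f' x) :
    HasGradientAt (fun y => c * f y) (c • f') x := by
  rw [hasGradientAt_iff_hasFDerivAt, map_smulₛₗ, conj_trivial]
  exact hf.hasFDerivAt.const_mul c

theorem HasGradientAt.fun_sum {ι : Type*} (s : Finset ι) {f : ι → F → ℝ} {f' : ι → F}
    (hf : ∀ i ∈ s, HasGradientAt (f i) (f' i) x) :
    HasGradientAt (fun y => ∑ i ∈ s, f i y) (∑ i ∈ s, f' i) x := by
  rw [hasGradientAt_iff_hasFDerivAt, map_sum]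
  exact HasFDerivAt.fun_sum fun i hi => (hf i hi).hasFDerivAt

theorem HasDerivAt.comp_hasGradientAt {k : ℝ → ℝ} {k' : ℝ} (hk : HasDerivAt k k' (f x))
    (hf : HasGradientAt f f' x) : HasGradientAt (fun y => k (f y)) (k' • f') x := by
  rw [hasGradientAt_iff_hasFDerivAt, map_smulₛₗ, conj_trivial]
  exact hk.comp_hasFDerivAt x hf.hasFDerivAt

end

theorem hasGradientAt_norm_sq_smul_sub (c : ℝ) (a x : F) :
    HasGradientAt (fun y => ‖c • (a - y)‖ ^ 2) ((2 * c ^ 2) • (x - a)) x := by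
  refine (((hasFDerivAt_id x).const_sub a).const_smul c).norm_sq.congr_fderiv ?_
  ext v
  simp only [id_eq, Pi.smul_apply, map_smul, map_sub, smul_neg, ContinuousLinearMap.comp_neg,
    ContinuousLinearMap.comp_smulₛₗ, ringHom_apply, ContinuousLinearMap.comp_id,
    _root_.neg_apply, _root_.smul_apply, _root_.sub_apply,
    coe_innerSL_apply, smul_eq_mul, nsmul_eq_mul, Nat.cast_ofNat,
    InnerProductSpace.toDual_apply_apply]
  ring

theorem hasGradientAt_comp_norm_sq_smul_sub {k : ℝ → ℝ} (c : ℝ) (a x : F)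
    (hk : DifferentiableAt ℝ k (‖c • (a - x)‖ ^ 2)) :
    HasGradientAt (fun y => k (‖c • (a - y)‖ ^ 2))
      ((2 * c ^ 2 * -deriv k (‖c • (a - x)‖ ^ 2)) • (a - x)) x := by
  convert HasDerivAt.comp_hasGradientAt (f := fun y => ‖c • (a - y)‖ ^ 2) hk.hasDerivAt
    (hasGradientAt_norm_sq_smul_sub c a x) using 1
  rw [smul_smul, ← neg_sub x a, smul_neg, ← neg_smul]
  congr 1
  ring

end Gradient

theorem Finset.sum_smul_sub_eq_smul_centerMass_sub {ι R V : Type*} [Field R] [AddCommGroup V]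
    [Module R V] {t : Finset ι} {w : ι → R} (z : ι → V) (x : V) (hw : ∑ i ∈ t, w i ≠ 0) :
    ∑ i ∈ t, w i • (z i - x) = (∑ i ∈ t, w i) • (t.centerMass w z - x) := by
  rw [Finset.centerMass, smul_sub, smul_inv_smul₀ hw]
  simp only [smul_sub, Finset.sum_sub_distrib, Finset.sum_smul]

theorem mean_shift_gradient_general {d n : ℕ}
    (k : ℝ → ℝ) (hk : Differentiable ℝ k)
    (g : ℝ → ℝ) (hg : ∀ t, g t = -deriv k t)
    (ck : ℝ) (cg : ℝ) (hcg : 0 < cg)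
    (h : ℝ) (hh : 0 < h) (X : Fin n → E d) (x : E d)
    (hden : 0 < ∑ i, g (‖h⁻¹ • (X i - x)‖ ^ 2)) :
    gradient (fun y => ck / (n * h ^ d) * ∑ i, k (‖h⁻¹ • (X i - y)‖ ^ 2)) x =
      ((cg / (n * h ^ d) * ∑ i, g (‖h⁻¹ • (X i - x)‖ ^ 2)) * (2 * ck / (h ^ 2 * cg))) •
        ((∑ i, g (‖h⁻¹ • (X i - x)‖ ^ 2))⁻¹ •
            (∑ i, g (‖h⁻¹ • (X i - x)‖ ^ 2) • X i) - x) := by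
  have hgrad := (HasGradientAt.fun_sum Finset.univ fun i _ =>
    hasGradientAt_comp_norm_sq_smul_sub h⁻¹ (X i) x (hk _)).const_mul (ck / (n * h ^ d))
  simp_rw [← hg] at hgrad
  have hn : (n : ℝ) ≠ 0 := Nat.cast_ne_zero.2 (by rintro rfl; simp at hden)
  rw [hgrad.gradient]
  simp_rw [mul_smul (2 * h⁻¹ ^ 2)]
  rw [← Finset.smul_sum, Finset.sum_smul_sub_eq_smul_centerMass_sub X x hden.ne', smul_smul,
    smul_smul, Finset.centerMass]
  generalize ∑ i, g (‖h⁻¹ • (X i - x)‖ ^ 2) = S at hden ⊢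
  congr 1
  field_simp

/-- **mean shift identity.** For a rotationally symmetric kernel with profile
`k`, `g = −k'`, the gradient of the kernel density estimator satisfies
`∇f̂_{h,K}(x) = f̂_{h,G}(x) · (2c_{k,d}/(h² c_{g,d})) · m_{h,G}(x)`. -/
theorem mean_shift_gradient {d n : ℕ}
    (k : ℝ → ℝ) (hk : Differentiable ℝ k)
    (g : ℝ → ℝ) (hg : ∀ t, g t = -deriv k t)
    (K : E d → ℝ) (ck : ℝ) (hck : 0 < ck) (hK : ∀ y : E d, K y = ck * k (‖y‖ ^ 2))
    (G : E d → ℝ) (cg : ℝ) (hcg : 0 < cg) (hG : ∀ y : E d, G y = cg * g (‖y‖ ^ 2))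
    (h : ℝ) (hh : 0 < h) (X : Fin n → E d) (x : E d)
    (hden : 0 < ∑ i, g (‖h⁻¹ • (X i - x)‖ ^ 2)) :
    gradient (fun y => ck / (n * h ^ d) * ∑ i, k (‖h⁻¹ • (X i - y)‖ ^ 2)) x =
      ((cg / (n * h ^ d) * ∑ i, g (‖h⁻¹ • (X i - x)‖ ^ 2)) * (2 * ck / (h ^ 2 * cg))) •
        ((∑ i, g (‖h⁻¹ • (X i - x)‖ ^ 2))⁻¹ •
            (∑ i, g (‖h⁻¹ • (X i - x)‖ ^ 2) • X i) - x) :=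
  mean_shift_gradient_general k hk g hg ck cg hcg h hh X x hden

end
end
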